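/- In S = (IO∞(ℤ))ⁿ, if 𝔠 is a congruence and α, β are distinct 𝔠-equivalent elements, then 𝕀 𝔠 ε for every idempotent ε ∈ S satisfying D(𝕀,ε) = D(α,β). -/

import Mathlib

/-- A partial injective self-map of ℤ (encoded as a `PEquiv`) is monotone. -/
def PMono (f : ℤ ≃. ℤ) : Prop :=
  ∀ x y a b : ℤ, a ∈ f x → b ∈ f y → x ≤ y → a ≤ b

/-- Domain of a partial injective self-map of ℤ. -/
def PDom (f : ℤ ≃. ℤ) : Set ℤ := {x | (f x).isSome}

/-- Range of a partial injective self-map of ℤ. -/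
def PRan (f : ℤ ≃. ℤ) : Set ℤ := {y | (f.symm y).isSome}

/-- Membership in IO∞(ℤ): injective (built into `PEquiv`), monotone,
with cofinite domain and cofinite range. -/
def IOZ (f : ℤ ≃. ℤ) : Prop :=
  PMono f ∧ (PDom f)ᶜ.Finite ∧ (PRan f)ᶜ.Finite

/-- Idempotent element of IO∞(ℤ). -/
def IsIdem (ε : ℤ ≃. ℤ) : Prop := ε.trans ε = ε

/-- Membership in the direct power (IO∞(ℤ))ⁿ. -/
def IOZn (n : ℕ) (α : Fin n → ℤ ≃. ℤ) : Prop := ∀ i, IOZ (α i)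

/-- Coordinatewise composition on the direct power (α then β, as in the paper). -/
def mulN {n : ℕ} (α β : Fin n → ℤ ≃. ℤ) : Fin n → ℤ ≃. ℤ := fun i => (α i).trans (β i)

/-- The identity 𝕀 of (IO∞(ℤ))ⁿ. -/
def oneN (n : ℕ) : Fin n → ℤ ≃. ℤ := fun _ => PEquiv.refl ℤ

/-- εᵢ°: the tuple with ε in coordinate i and identities elsewhere. -/
def epsT {n : ℕ} (i : Fin n) (ε : ℤ ≃. ℤ) : Fin n → ℤ ≃. ℤ :=
  fun j => if j = i then ε else PEquiv.refl ℤ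

/-- A congruence on the semigroup (IO∞(ℤ))ⁿ (relative to the carrier `IOZn n`). -/
def IsCongOn (n : ℕ) (ρ : (Fin n → ℤ ≃. ℤ) → (Fin n → ℤ ≃. ℤ) → Prop) : Prop :=
  (∀ α, IOZn n α → ρ α α) ∧
  (∀ α β, IOZn n α → IOZn n β → ρ α β → ρ β α) ∧
  (∀ α β γ, IOZn n α → IOZn n β → IOZn n γ → ρ α β → ρ β γ → ρ α γ) ∧
  (∀ α β γ, IOZn n α → IOZn n β → IOZn n γ → ρ α β →
    ρ (mulN α γ) (mulN β γ) ∧ ρ (mulN γ α) (mulN γ β))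

/-- The congruence σ_[i]. -/
def sigmaI (n : ℕ) (i : Fin n) (α β : Fin n → ℤ ≃. ℤ) : Prop :=
  ∃ ε : ℤ ≃. ℤ, IOZ ε ∧ IsIdem ε ∧ mulN α (epsT i ε) = mulN β (epsT i ε)

/-- D(α,β): the set of coordinates where α and β differ. -/
def Dset {n : ℕ} (α β : Fin n → ℤ ≃. ℤ) : Set (Fin n) := {i | α i ≠ β i}

/-- Idempotent tuple. -/
def IsIdemN {n : ℕ} (ε : Fin n → ℤ ≃. ℤ) : Prop := ∀ i, (ε i).trans (ε i) = ε i

/-- σ_[i₁,…,i_k] for the set of indices t: α and β agree after right multiplication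
by a product ε°_{i₁}⋯ε°_{i_k} of idempotents supported on t. -/
def sigmaSet (n : ℕ) (t : Finset (Fin n)) (α β : Fin n → ℤ ≃. ℤ) : Prop :=
  ∃ ε : Fin n → ℤ ≃. ℤ, IOZn n ε ∧ IsIdemN ε ∧ (∀ i ∉ t, ε i = PEquiv.refl ℤ) ∧
    mulN α ε = mulN β ε

/-!
Idempotents of IO∞(ℤ) are the partial identities `ofSet W` on cofinite sets `W`. Since `α 𝔠 β`
with `αᵢ ≠ βᵢ`, after cutting away one point of the domain there is a point in the range of `αᵢ`
not in the range of `βᵢ`; multiplying by inverses turns this into two 𝔠-related partial identities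
differing at `i`. Conjugating by order isomorphisms `ℤ ≃o Eⱼ` gives `𝕀 𝔠 (ofSet Wⱼ)ⱼ` with a hole
at any prescribed point `(i, w)`. The partial identities 𝔠-related to `𝕀` are closed under
intersections and enlargement, so they contain every idempotent whose holes lie in coordinates
of `D(α, β)`.
-/

open Function Set PEquiv
open scoped Classical

namespace PEquiv

variable {α β : Type*}

theorem ofSet_trans_ofSet (s t : Set α) {_ : DecidablePred (· ∈ s)} {_ : DecidablePred (· ∈ t)}
    {_ : DecidablePred (· ∈ s ∩ t)} : (ofSet s).trans (ofSet t) = ofSet (s ∩ t) := by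
  ext a b
  simp only [trans_eq_some, ofSet_eq_some_iff, mem_inter_iff]
  grind

theorem trans_ofSet_eq_self {f : α ≃. β} {s : Set β} [DecidablePred (· ∈ s)]
    (h : ∀ a b, f a = some b → b ∈ s) : f.trans (ofSet s) = f := by
  ext a b
  simp only [trans_eq_some, ofSet_eq_some_iff]
  exact ⟨fun ⟨c, hc, hbc, _⟩ => hbc ▸ hc, fun hb => ⟨b, hb, rfl, h a b hb⟩⟩

theorem eq_ofSet_of_trans_self {f : α ≃. α} (h : f.trans f = f) :
    f = ofSet {a | (f a).isSome} := by
  have fixed : ∀ {a b}, f a = some b → f b = some b := fun {a b} hab => by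
    obtain ⟨c, hc, hcb⟩ := (trans_eq_some f f a b).1 (by rwa [h])
    obtain rfl : b = c := Option.some_inj.1 (hab.symm.trans hc)
    exact hcb
  ext a b
  rw [ofSet_eq_some_iff]
  refine ⟨fun hab => ⟨f.inj (fixed hab) hab, by simp [fixed hab]⟩, ?_⟩
  rintro ⟨rfl, ha⟩
  obtain ⟨c, hc⟩ := Option.isSome_iff_exists.1 ha
  obtain rfl := f.inj (fixed hc) hc
  exact hc

noncomputable def ofInjective (f : α → β) (hf : Injective f) : α ≃. β where
  toFun a := some (f a)
  invFun := partialInv f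
  inv a b := by simpa [eq_comm] using hf.isPartialInv a b

@[simp]
theorem ofInjective_apply {f : α → β} (hf : Injective f) (a : α) :
    ofInjective f hf a = some (f a) := rfl

theorem ofInjective_trans_ofSet_trans_symm {f : α → β} (hf : Injective f) (s : Set β)
    {_ : DecidablePred (· ∈ s)} {_ : DecidablePred (· ∈ f ⁻¹' s)} :
    ((ofInjective f hf).trans (ofSet s)).trans (ofInjective f hf).symm = ofSet (f ⁻¹' s) := by
  ext a b
  simp [trans_eq_some, eq_some_iff, hf.eq_iff]

end PEquiv

theorem finite_compl_inter {α : Type*} {s t : Set α} (hs : sᶜ.Finite) (ht : tᶜ.Finite) :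
    (s ∩ t)ᶜ.Finite := by
  rw [compl_inter]
  exact hs.union ht

theorem finite_compl_setOf_prodMk_notMem {α β : Type*} {t : Set (α × β)} (ht : t.Finite)
    (a : α) : {b | (a, b) ∉ t}ᶜ.Finite :=
  (ht.preimage (Prod.mk_right_injective a).injOn).subset fun _ hb => not_not.1 hb

theorem mem_PRan_iff {f : ℤ ≃. ℤ} {y : ℤ} : y ∈ PRan f ↔ ∃ x, f x = some y := by
  simp [PRan, Option.isSome_iff_exists, eq_some_iff]

theorem PDom_ofSet (s : Set ℤ) [DecidablePred (· ∈ s)] : PDom (ofSet s) = s := by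
  ext x
  simp [PDom, Option.isSome_iff_exists]

theorem PMono.trans {f g : ℤ ≃. ℤ} (hf : PMono f) (hg : PMono g) : PMono (f.trans g) := by
  intro x y a b ha hb hxy
  obtain ⟨u, hu, hua⟩ := (mem_trans f g x a).1 ha
  obtain ⟨v, hv, hvb⟩ := (mem_trans f g y b).1 hb
  exact hg u v a b hua hvb (hf x y u v hu hv hxy)

theorem PMono.symm {f : ℤ ≃. ℤ} (hf : PMono f) : PMono f.symm := by
  intro x y a b ha hb hxy
  rw [mem_iff_mem] at ha hb
  by_contra! hlt
  obtain rfl : x = y := le_antisymm hxy (hf b a y x hb ha hlt.le)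
  exact hlt.ne (f.inj hb ha)

theorem compl_PDom_trans_finite {f g : ℤ ≃. ℤ} (hf : (PDom f)ᶜ.Finite)
    (hg : (PDom g)ᶜ.Finite) : (PDom (f.trans g))ᶜ.Finite := by
  refine (hf.union (hg.image fun y => (f.symm y).getD 0)).subset fun x hx => ?_
  rcases hfx : f x with _ | y
  · left
    simp [PDom, hfx]
  · right
    refine ⟨y, fun hy => hx ?_, by simp [(f.eq_some_iff).2 hfx]⟩
    show ((f x).bind g).isSome
    rw [hfx]
    exact hy

theorem IOZ.trans {f g : ℤ ≃. ℤ} (hf : IOZ f) (hg : IOZ g) : IOZ (f.trans g) :=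
  ⟨hf.1.trans hg.1, compl_PDom_trans_finite hf.2.1 hg.2.1,
    compl_PDom_trans_finite (f := g.symm) (g := f.symm) hg.2.2 hf.2.2⟩

theorem IOZ.symm {f : ℤ ≃. ℤ} (hf : IOZ f) : IOZ f.symm :=
  ⟨hf.1.symm, hf.2.2, hf.2.1⟩

theorem IOZ_ofSet {s : Set ℤ} [DecidablePred (· ∈ s)] (hs : sᶜ.Finite) : IOZ (ofSet s) := by
  refine ⟨fun x y a b ha hb hxy => ?_, by rwa [PDom_ofSet],
    by rwa [PRan, ofSet_symm, ← PDom, PDom_ofSet]⟩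
  rw [mem_ofSet_iff] at ha hb
  rw [ha.1, hb.1]
  exact hxy

theorem IOZ_refl : IOZ (PEquiv.refl ℤ) := by
  simpa using IOZ_ofSet (s := univ) (by simp)

theorem IOZ_ofInjective {f : ℤ → ℤ} (hf : StrictMono f) (hr : (range f)ᶜ.Finite) :
    IOZ (ofInjective f hf.injective) := by
  refine ⟨fun x y a b ha hb hxy => ?_, by simp [PDom], ?_⟩
  · simp only [ofInjective_apply, Option.mem_def, Option.some_inj] at ha hb
    exact ha ▸ hb ▸ hf.monotone hxy
  · convert hr using 2
    ext y
    simp [mem_PRan_iff]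

theorem exists_strictMono_range_eq {A : Set ℤ} (hA : Aᶜ.Finite) {a : ℤ} (ha : a ∈ A) (w : ℤ) :
    ∃ f : ℤ → ℤ, StrictMono f ∧ range f = A ∧ f w = a := by
  obtain ⟨M, hM⟩ := hA.bddAbove
  obtain ⟨m, hm⟩ := hA.bddBelow
  have : Nonempty A := ⟨⟨a, ha⟩⟩
  have : NoMaxOrder A := ⟨fun x => ⟨⟨max (x : ℤ) M + 1, by_contra fun h => by
    have := hM h; omega⟩, show (x : ℤ) < max (x : ℤ) M + 1 by omega⟩⟩
  have : NoMinOrder A := ⟨fun x => ⟨⟨min (x : ℤ) m - 1, by_contra fun h => by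
    have := hm h; omega⟩, show min (x : ℤ) m - 1 < x by omega⟩⟩
  let := LinearLocallyFiniteOrder.succOrder A
  let := LinearLocallyFiniteOrder.predOrder A
  let e : A ≃o ℤ := orderIsoIntOfLinearSuccPredArch
  refine ⟨fun z => e.symm (z - w + e ⟨a, ha⟩), fun x y hxy => ?_, ?_, by simp⟩
  · simp only [Subtype.coe_lt_coe, OrderIso.lt_iff_lt]
    omega
  · ext y
    refine ⟨by rintro ⟨z, rfl⟩; exact Subtype.coe_prop _,
      fun hy => ⟨e ⟨y, hy⟩ + w - e ⟨a, ha⟩, ?_⟩⟩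
    change ((e.symm (e ⟨y, hy⟩ + w - e ⟨a, ha⟩ - w + e ⟨a, ha⟩) : A) : ℤ) = y
    rw [show e ⟨y, hy⟩ + w - e ⟨a, ha⟩ - w + e ⟨a, ha⟩ = e ⟨y, hy⟩ by abel,
      OrderIso.symm_apply_apply]

section Tuples

variable {n : ℕ}

noncomputable def ofSetN (W : Fin n → Set ℤ) : Fin n → ℤ ≃. ℤ := fun j => ofSet (W j)

theorem IOZn.mulN {α β : Fin n → ℤ ≃. ℤ} (hα : IOZn n α) (hβ : IOZn n β) :
    IOZn n (mulN α β) := fun j => (hα j).trans (hβ j)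

theorem IOZn.symm {α : Fin n → ℤ ≃. ℤ} (hα : IOZn n α) : IOZn n fun j => (α j).symm :=
  fun j => (hα j).symm

theorem IOZn_oneN : IOZn n (oneN n) := fun _ => IOZ_refl

theorem IOZn_ofSetN {W : Fin n → Set ℤ} (hW : ∀ j, (W j)ᶜ.Finite) : IOZn n (ofSetN W) :=
  fun j => IOZ_ofSet (hW j)

theorem ofSetN_eq_oneN {W : Fin n → Set ℤ} (hW : ∀ j, W j = univ) : ofSetN W = oneN n :=
  funext fun j => ofSet_eq_refl.2 (hW j)

theorem mulN_oneN (α : Fin n → ℤ ≃. ℤ) : mulN α (oneN n) = α :=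
  funext fun j => trans_refl (α j)

theorem mulN_ofSetN (V W : Fin n → Set ℤ) :
    mulN (ofSetN V) (ofSetN W) = ofSetN fun j => V j ∩ W j :=
  funext fun j => ofSet_trans_ofSet (V j) (W j)

theorem symm_mulN_self (α : Fin n → ℤ ≃. ℤ) :
    mulN (fun j => (α j).symm) α = ofSetN fun j => PRan (α j) := by
  funext j
  ext a b
  simp only [mulN, ofSetN, trans_eq_some, ofSet_eq_some_iff, mem_PRan_iff, eq_some_iff]
  grind

end Tuples

namespace IsCongOn

variable {n : ℕ} {ρ : (Fin n → ℤ ≃. ℤ) → (Fin n → ℤ ≃. ℤ) → Prop} (hρ : IsCongOn n ρ)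
  {α β γ : Fin n → ℤ ≃. ℤ}
include hρ

theorem rel_refl (hα : IOZn n α) : ρ α α := hρ.1 α hα

theorem rel_symm (hα : IOZn n α) (hβ : IOZn n β) (h : ρ α β) : ρ β α := hρ.2.1 α β hα hβ h

theorem rel_trans (hα : IOZn n α) (hβ : IOZn n β) (hγ : IOZn n γ) (h₁ : ρ α β) (h₂ : ρ β γ) :
    ρ α γ :=
  hρ.2.2.1 α β γ hα hβ hγ h₁ h₂

theorem mul_right (hα : IOZn n α) (hβ : IOZn n β) (hγ : IOZn n γ) (h : ρ α β) :
    ρ (mulN α γ) (mulN β γ) :=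
  (hρ.2.2.2 α β γ hα hβ hγ h).1

theorem mul_left (hα : IOZn n α) (hβ : IOZn n β) (hγ : IOZn n γ) (h : ρ α β) :
    ρ (mulN γ α) (mulN γ β) :=
  (hρ.2.2.2 α β γ hα hβ hγ h).2

theorem rel_ofSetN_PRan (hα : IOZn n α) (hβ : IOZn n β) (h : ρ α β) :
    ρ (ofSetN fun j => PRan (α j)) (ofSetN fun j => PRan (α j) ∩ PRan (β j)) := by
  have hβα : IOZn n (mulN (fun j => (α j).symm) β) := hα.symm.mulN hβ
  have hα' : IOZn n (ofSetN fun j => PRan (α j)) := IOZn_ofSetN fun j => (hα j).2.2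
  have hαβ : IOZn n (ofSetN fun j => PRan (α j) ∩ PRan (β j)) :=
    IOZn_ofSetN fun j => finite_compl_inter (hα j).2.2 (hβ j).2.2
  have hδ : IOZn n (ofSetN fun j => PRan (β j)) := IOZn_ofSetN fun j => (hβ j).2.2
  -- `α⁻¹α 𝔠 α⁻¹β`; multiplying on the right by `β⁻¹β` fixes `α⁻¹β`.
  have h₁ := hρ.mul_left hα hβ hα.symm h
  have h₂ := hρ.mul_right (hα.symm.mulN hα) hβα hδ h₁
  rw [symm_mulN_self] at h₁ h₂
  rw [mulN_ofSetN] at h₂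
  have hβα_δ : mulN (mulN (fun j => (α j).symm) β) (ofSetN fun j => PRan (β j)) =
      mulN (fun j => (α j).symm) β := by
    funext j
    refine trans_ofSet_eq_self fun a b hab => mem_PRan_iff.2 ?_
    obtain ⟨c, -, hc⟩ := (trans_eq_some _ _ a b).1 hab
    exact ⟨c, hc⟩
  rw [hβα_δ] at h₂
  exact hρ.rel_trans hα' hβα hαβ h₁ (hρ.rel_symm hαβ hβα h₂)

theorem exists_rel_ofSetN_of_ne (hα : IOZn n α) (hβ : IOZn n β) (h : ρ α β) {i : Fin n}
    (hne : α i ≠ β i) :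
    ∃ E F : Fin n → Set ℤ, (∀ j, (E j)ᶜ.Finite) ∧ (∀ j, (F j)ᶜ.Finite) ∧
      ρ (ofSetN E) (ofSetN F) ∧ ∃ p ∈ E i, p ∉ F i := by
  obtain ⟨x, hx⟩ : ∃ x, α i x ≠ β i x := by
    by_contra! hx
    exact hne (PEquiv.ext hx)
  wlog hαx : (α i x).isSome generalizing α β
  · refine this hβ hα (hρ.rel_symm hα hβ h) hne.symm hx.symm ?_
    rw [Option.not_isSome_iff_eq_none] at hαx
    rw [hαx] at hx
    exact Option.ne_none_iff_isSome.1 hx.symm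
  obtain ⟨p, hp⟩ := Option.isSome_iff_exists.1 hαx
  -- Cutting away the point that `β` sends to `p` keeps `p` in the range of `α i` only.
  set cut := ofSetN fun j => {z | β j z ≠ some p}
  have hcut : IOZn n cut := IOZn_ofSetN fun j =>
    Set.Subsingleton.finite fun a ha b hb => (β j).inj (not_not.1 ha) (not_not.1 hb)
  have hcα := hcut.mulN hα
  have hcβ := hcut.mulN hβ
  refine ⟨_, _, fun j => (hcα j).2.2, fun j => finite_compl_inter (hcα j).2.2 (hcβ j).2.2,
    hρ.rel_ofSetN_PRan hcα hcβ (hρ.mul_left hα hβ hcut h), p, mem_PRan_iff.2 ⟨x, ?_⟩, ?_⟩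
  · refine (trans_eq_some _ _ x p).2 ⟨x, ofSet_eq_some_iff.2 ⟨rfl, ?_⟩, hp⟩
    exact fun hβx => hx (hp.trans hβx.symm)
  · rintro ⟨-, hpβ⟩
    obtain ⟨z, hz⟩ := mem_PRan_iff.1 hpβ
    obtain ⟨c, hc, hcp⟩ := (trans_eq_some _ _ z p).1 hz
    exact (ofSet_eq_some_iff.1 hc).2 hcp

theorem rel_ofSetN_preimage {f : Fin n → ℤ → ℤ} (hf : ∀ j, StrictMono (f j))
    (hr : ∀ j, (range (f j))ᶜ.Finite) {E F : Fin n → Set ℤ} (hE : ∀ j, (E j)ᶜ.Finite)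
    (hF : ∀ j, (F j)ᶜ.Finite) (h : ρ (ofSetN E) (ofSetN F)) :
    ρ (ofSetN fun j => f j ⁻¹' E j) (ofSetN fun j => f j ⁻¹' F j) := by
  set χ : Fin n → ℤ ≃. ℤ := fun j => ofInjective (f j) (hf j).injective
  have hχ : IOZn n χ := fun j => IOZ_ofInjective (hf j) (hr j)
  have conj : ∀ W : Fin n → Set ℤ,
      mulN (mulN χ (ofSetN W)) (fun j => (χ j).symm) = ofSetN fun j => f j ⁻¹' W j :=
    fun W => funext fun j => ofInjective_trans_ofSet_trans_symm _ (W j)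
  have h' := hρ.mul_right (hχ.mulN (IOZn_ofSetN hE)) (hχ.mulN (IOZn_ofSetN hF)) hχ.symm
    (hρ.mul_left (IOZn_ofSetN hE) (IOZn_ofSetN hF) hχ h)
  rwa [conj, conj] at h'

theorem rel_mulN_of_rel_one (hγ : IOZn n γ) (hα : IOZn n α) (h : ρ (oneN n) α) :
    ρ γ (mulN γ α) := by
  simpa only [mulN_oneN] using hρ.mul_left IOZn_oneN hα hγ h

theorem rel_one_ofSetN_inter {V W : Fin n → Set ℤ} (hV : ∀ j, (V j)ᶜ.Finite)
    (hW : ∀ j, (W j)ᶜ.Finite) (hρV : ρ (oneN n) (ofSetN V)) (hρW : ρ (oneN n) (ofSetN W)) :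
    ρ (oneN n) (ofSetN fun j => V j ∩ W j) := by
  have h := hρ.rel_mulN_of_rel_one (IOZn_ofSetN hV) (IOZn_ofSetN hW) hρW
  rw [mulN_ofSetN] at h
  exact hρ.rel_trans IOZn_oneN (IOZn_ofSetN hV)
    (IOZn_ofSetN fun j => finite_compl_inter (hV j) (hW j)) hρV h

theorem rel_one_ofSetN_of_subset {V W : Fin n → Set ℤ} (hV : ∀ j, (V j)ᶜ.Finite)
    (hW : ∀ j, (W j)ᶜ.Finite) (hVW : ∀ j, V j ⊆ W j) (hρV : ρ (oneN n) (ofSetN V)) :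
    ρ (oneN n) (ofSetN W) := by
  have h := hρ.rel_mulN_of_rel_one (IOZn_ofSetN hW) (IOZn_ofSetN hV) hρV
  simp only [mulN_ofSetN, inter_eq_right.2 (hVW _)] at h
  exact hρ.rel_trans IOZn_oneN (IOZn_ofSetN hV) (IOZn_ofSetN hW) hρV
    (hρ.rel_symm (IOZn_ofSetN hW) (IOZn_ofSetN hV) h)

theorem rel_one_ofSetN_ne (hα : IOZn n α) (hβ : IOZn n β) (h : ρ α β) {i : Fin n}
    (hne : α i ≠ β i) (w : ℤ) : ρ (oneN n) (ofSetN fun j => {v | (j, v) ≠ (i, w)}) := by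
  obtain ⟨E, F, hE, hF, hEF, p, hpE, hpF⟩ := hρ.exists_rel_ofSetN_of_ne hα hβ h hne
  have hf : ∀ j, ∃ f : ℤ → ℤ, StrictMono f ∧ range f = E j ∧ (j = i → f w = p) := by
    intro j
    by_cases hj : j = i
    · subst hj
      obtain ⟨f, hf, hfE, hfw⟩ := exists_strictMono_range_eq (hE j) hpE w
      exact ⟨f, hf, hfE, fun _ => hfw⟩
    · obtain ⟨q, hq⟩ := ((hE j).infinite_compl.mono (compl_compl (E j)).subset).nonempty
      obtain ⟨f, hf, hfE, -⟩ := exists_strictMono_range_eq (hE j) hq w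
      exact ⟨f, hf, hfE, fun h => absurd h hj⟩
  choose f hf hfE hfw using hf
  have hρf := hρ.rel_ofSetN_preimage hf (fun j => hfE j ▸ hE j) hE hF hEF
  rw [ofSetN_eq_oneN fun j => by rw [← hfE j, preimage_range]] at hρf
  refine hρ.rel_one_ofSetN_of_subset (fun j => (hF j).preimage (hf j).injective.injOn)
    (fun j => finite_compl_setOf_prodMk_notMem (finite_singleton (i, w)) j)
    (fun j v hv hjv => ?_) hρf
  obtain ⟨rfl, rfl⟩ := Prod.mk.inj hjv
  exact hpF (hfw j rfl ▸ hv)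

theorem rel_one_ofSetN_of_finite {C : Set (Fin n × ℤ)} (hC : C.Finite)
    (hole : ∀ a ∈ C, ρ (oneN n) (ofSetN fun j => {v | (j, v) ≠ a})) :
    ρ (oneN n) (ofSetN fun j => {v | (j, v) ∉ C}) := by
  refine hC.induction_on_subset C ?_ fun {a t} ha hts _ ih => ?_
  · rw [ofSetN_eq_oneN fun j => by simp]
    exact hρ.rel_refl IOZn_oneN
  · have hinsert : (fun j => {v | (j, v) ∉ insert a t}) =
        fun j => {v | (j, v) ∉ t} ∩ {v | (j, v) ≠ a} := by
      ext j v
      simp [and_comm]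
    rw [hinsert]
    exact hρ.rel_one_ofSetN_inter (finite_compl_setOf_prodMk_notMem (hC.subset hts))
      (finite_compl_setOf_prodMk_notMem (finite_singleton a)) ih (hole a ha)

end IsCongOn

theorem stmt15_general (n : ℕ) (ρ : (Fin n → ℤ ≃. ℤ) → (Fin n → ℤ ≃. ℤ) → Prop)
    (hρ : IsCongOn n ρ) (α β : Fin n → ℤ ≃. ℤ) (hα : IOZn n α) (hβ : IOZn n β)
    (hab : ρ α β) :
    ∀ ε : Fin n → ℤ ≃. ℤ, IOZn n ε → IsIdemN ε → Dset (oneN n) ε = Dset α β →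
      ρ (oneN n) ε := by
  intro ε hε hidem hD
  set C : Set (Fin n × ℤ) := {a | a.2 ∉ PDom (ε a.1)}
  have hC : C.Finite := (finite_univ.prod (finite_iUnion fun j => (hε j).2.1)).subset
    fun a ha => ⟨trivial, mem_iUnion.2 ⟨a.1, ha⟩⟩
  have hεC : ε = ofSetN fun j => {v | (j, v) ∉ C} := by
    funext j
    refine (eq_ofSet_of_trans_self (hidem j)).trans ?_
    ext v w
    simp [ofSetN, C, PDom, Option.isSome_iff_ne_none]
  rw [hεC]
  refine hρ.rel_one_ofSetN_of_finite hC fun ⟨i, w⟩ hw => hρ.rel_one_ofSetN_ne hα hβ hab ?_ w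
  have hi : i ∈ Dset (oneN n) ε := fun h => hw (by rw [← h]; rfl)
  rwa [hD] at hi

/-- if α ≠ β are 𝔠-equivalent then 𝕀 𝔠 ε for EVERY idempotent ε with
D(𝕀,ε) = D(α,β). -/
theorem stmt15 (n : ℕ) (ρ : (Fin n → ℤ ≃. ℤ) → (Fin n → ℤ ≃. ℤ) → Prop)
    (hρ : IsCongOn n ρ) (α β : Fin n → ℤ ≃. ℤ) (hα : IOZn n α) (hβ : IOZn n β)
    (hab : ρ α β) (hne : α ≠ β) :
    ∀ ε : Fin n → ℤ ≃. ℤ, IOZn n ε → IsIdemN ε → Dset (oneN n) ε = Dset α β →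
      ρ (oneN n) ε :=
  stmt15_general n ρ hρ α β hα hβ hab
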